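/- arXiv:1503.02482 — 2 statements merged into one kernel-verified Lean document; each statement's English description precedes it below -/
import Mathlib

section
/- Let (G,P,Δ) be a Garside group of finite type, let v̄, w̄ ∈ G with inf(v̄) = inf(w̄) = 0, write d = v̄ ∧ w̄, v̄ = da, w̄ = db with a ∧ b = 1, and let r = sup(a). Then sup(∂v̄ ∧ (∂a · τ^r(b))) ≥ r, i.e., ∂v̄ and ∂a · τ^r(b) have a common prefix of canonical length at least r. -/
/-- A Garside group of finite type: a group `G` (the group of fractions of its positive
monoid `P`), with a Garside element `Δ`, together with the associated data (left gcds,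
infimum, supremum, distinguished coset representatives) satisfying the Garside axioms.
Here `u ≼ v` (prefix order) is encoded by `u⁻¹ * v ∈ P` and `u` being a suffix of `v`
by `v * u⁻¹ ∈ P`. -/
structure GarsideGroup (G : Type*) [Group G] where
  /-- the positive monoid, viewed inside its group of fractions -/
  P : Submonoid G
  /-- the Garside element -/
  Δ : G
  delta_pos : Δ ∈ P
  /-- `G` is the group of fractions of `P` -/
  fractions : ∀ x : G, ∃ p ∈ P, ∃ q ∈ P, x = p⁻¹ * q
  /-- atomicity: the lengths of decompositions of a positive element into nontrivial
  positive factors are bounded -/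
  atomic : ∀ p ∈ P, ∃ N : ℕ,
    ∀ l : List G, (∀ a ∈ l, a ∈ P ∧ a ≠ 1) → l.prod = p → l.length ≤ N
  /-- left gcds for the prefix order -/
  lgcd : G → G → G
  lgcd_dvd_left : ∀ a b : G, (lgcd a b)⁻¹ * a ∈ P
  lgcd_dvd_right : ∀ a b : G, (lgcd a b)⁻¹ * b ∈ P
  lgcd_greatest : ∀ a b c : G, c⁻¹ * a ∈ P → c⁻¹ * b ∈ P → c⁻¹ * lgcd a b ∈ P
  /-- left lcms exist -/
  llcm_exists : ∀ a b : G, ∃ m : G, a⁻¹ * m ∈ P ∧ b⁻¹ * m ∈ P ∧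
    ∀ c : G, a⁻¹ * c ∈ P → b⁻¹ * c ∈ P → m⁻¹ * c ∈ P
  /-- right gcds exist -/
  rgcd_exists : ∀ a b : G, ∃ d : G, a * d⁻¹ ∈ P ∧ b * d⁻¹ ∈ P ∧
    ∀ c : G, a * c⁻¹ ∈ P → b * c⁻¹ ∈ P → d * c⁻¹ ∈ P
  /-- right lcms exist -/
  rlcm_exists : ∀ a b : G, ∃ m : G, m * a⁻¹ ∈ P ∧ m * b⁻¹ ∈ P ∧
    ∀ c : G, c * a⁻¹ ∈ P → c * b⁻¹ ∈ P → c * m⁻¹ ∈ P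
  /-- the left divisors of `Δ` coincide with its right divisors (the simple elements) -/
  simples_symm : ∀ s : G, (s ∈ P ∧ s⁻¹ * Δ ∈ P) ↔ (s ∈ P ∧ Δ * s⁻¹ ∈ P)
  /-- finite type: there are only finitely many simple elements -/
  simples_finite : {s : G | s ∈ P ∧ s⁻¹ * Δ ∈ P}.Finite
  /-- the simple elements generate `P` -/
  simples_generate : ∀ p ∈ P, p ∈ Submonoid.closure {s : G | s ∈ P ∧ s⁻¹ * Δ ∈ P}
  /-- the infimum: `ginf x = max { r : ℤ | Δ^r ≼ x }` -/
  ginf : G → ℤ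
  ginf_dvd : ∀ x : G, (Δ ^ ginf x)⁻¹ * x ∈ P
  ginf_max : ∀ (x : G) (r : ℤ), (Δ ^ r)⁻¹ * x ∈ P → r ≤ ginf x
  /-- the supremum: `gsup x = min { s : ℤ | x ≼ Δ^s }` -/
  gsup : G → ℤ
  gsup_dvd : ∀ x : G, x⁻¹ * Δ ^ gsup x ∈ P
  gsup_min : ∀ (x : G) (s : ℤ), x⁻¹ * Δ ^ s ∈ P → gsup x ≤ s
  /-- each coset `gΔ^ℤ` has a unique distinguished representative, of infimum `0` -/
  rep : G ⧸ Subgroup.zpowers Δ → G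
  rep_mem : ∀ v : G ⧸ Subgroup.zpowers Δ,
    (QuotientGroup.mk (rep v) : G ⧸ Subgroup.zpowers Δ) = v
  rep_inf : ∀ v : G ⧸ Subgroup.zpowers Δ, ginf (rep v) = 0
  rep_eq : ∀ x : G, ginf x = 0 → rep (QuotientGroup.mk x) = x

namespace GarsideGroup

variable {G : Type*} [Group G]

/-- the prefix order: `u ≼ v` -/
def LDvd (g : GarsideGroup G) (u v : G) : Prop := u⁻¹ * v ∈ g.P

/-- the suffix order: `u` is a suffix of `v` -/
def RDvd (g : GarsideGroup G) (u v : G) : Prop := v * u⁻¹ ∈ g.P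

/-- simple elements: positive left divisors of `Δ` -/
def Simple (g : GarsideGroup G) (s : G) : Prop := s ∈ g.P ∧ g.LDvd s g.Δ

/-- atoms of the positive monoid -/
def Atom (g : GarsideGroup G) (a : G) : Prop :=
  a ∈ g.P ∧ a ≠ 1 ∧ ∀ u v : G, u ∈ g.P → v ∈ g.P → a = u * v → u = 1 ∨ v = 1

/-- the canonical length `ℓ(x) = sup(x) - inf(x)` -/
def ell (g : GarsideGroup G) (x : G) : ℤ := g.gsup x - g.ginf x

/-- the (powers of the) inner automorphism `τ(x) = Δ⁻¹ x Δ`: `tau k x = Δ^{-k} x Δ^k` -/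
def tau (g : GarsideGroup G) (k : ℤ) (x : G) : G := g.Δ ^ (-k) * x * g.Δ ^ k

/-- the right complement `∂y = y⁻¹ Δ^{sup y}` -/
def comp (g : GarsideGroup G) (y : G) : G := y⁻¹ * g.Δ ^ g.gsup y

/-- `x` absorbs `y` -/
def Absorbs (g : GarsideGroup G) (x y : G) : Prop :=
  g.ginf (x * y) = g.ginf x ∧ g.gsup (x * y) = g.gsup x

/-- absorbable elements -/
def Absorbable (g : GarsideGroup G) (y : G) : Prop :=
  (g.ginf y = 0 ∨ g.gsup y = 0) ∧ ∃ x : G, g.Absorbs x y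

end GarsideGroup

namespace GarsideGroup

variable {G : Type*} [Group G] (g : GarsideGroup G)

/-- `P` is stable under `τ`: the conjugate `Δ⁻¹ p Δ` of a positive element is positive. -/
lemma conj_delta_mem {p : G} (hp : p ∈ g.P) : g.Δ⁻¹ * p * g.Δ ∈ g.P := by
  have h := g.simples_generate p hp
  clear hp
  induction h using Submonoid.closure_induction with
  | mem s hs =>
      obtain ⟨hs1, hs2⟩ := hs
      have h1 : s⁻¹ * g.Δ ∈ g.P := hs2
      have h2 : g.Δ * (s⁻¹ * g.Δ)⁻¹ ∈ g.P := by
        have he : g.Δ * (s⁻¹ * g.Δ)⁻¹ = s := by group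
        rw [he]; exact hs1
      have h3 := ((g.simples_symm (s⁻¹ * g.Δ)).mpr ⟨h1, h2⟩).2
      have he : (s⁻¹ * g.Δ)⁻¹ * g.Δ = g.Δ⁻¹ * s * g.Δ := by group
      rwa [he] at h3
  | one => simpa using g.P.one_mem
  | mul x y _ _ ihx ihy =>
      have := g.P.mul_mem ihx ihy
      have he : g.Δ⁻¹ * x * g.Δ * (g.Δ⁻¹ * y * g.Δ) = g.Δ⁻¹ * (x * y) * g.Δ := by group
      rwa [he] at this

/-- `P` is stable under `τ⁻¹` as well. -/
lemma conj_delta_mem' {p : G} (hp : p ∈ g.P) : g.Δ * p * g.Δ⁻¹ ∈ g.P := by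
  have h := g.simples_generate p hp
  clear hp
  induction h using Submonoid.closure_induction with
  | mem s hs =>
      obtain ⟨hs1, hs2⟩ := hs
      have h1 : g.Δ * s⁻¹ ∈ g.P := ((g.simples_symm s).mp ⟨hs1, hs2⟩).2
      have h2 : (g.Δ * s⁻¹)⁻¹ * g.Δ ∈ g.P := by
        have he : (g.Δ * s⁻¹)⁻¹ * g.Δ = s := by group
        rw [he]; exact hs1
      have h3 := ((g.simples_symm (g.Δ * s⁻¹)).mp ⟨h1, h2⟩).2
      have he : g.Δ * (g.Δ * s⁻¹)⁻¹ = g.Δ * s * g.Δ⁻¹ := by group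
      rwa [he] at h3
  | one => simpa using g.P.one_mem
  | mul x y _ _ ihx ihy =>
      have := g.P.mul_mem ihx ihy
      have he : g.Δ * x * g.Δ⁻¹ * (g.Δ * y * g.Δ⁻¹) = g.Δ * (x * y) * g.Δ⁻¹ := by group
      rwa [he] at this

/-- `P` is stable under conjugation by any power of `Δ`. -/
lemma zpow_conj_mem (k : ℤ) {p : G} (hp : p ∈ g.P) :
    g.Δ ^ k * p * g.Δ ^ (-k) ∈ g.P := by
  induction k using Int.induction_on with
  | zero => simpa using hp
  | succ n ih =>
      have h := g.conj_delta_mem' ih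
      have he : g.Δ * (g.Δ ^ (n : ℤ) * p * g.Δ ^ (-(n : ℤ))) * g.Δ⁻¹
          = g.Δ ^ ((n : ℤ) + 1) * p * g.Δ ^ (-((n : ℤ) + 1)) := by group
      rwa [he] at h
  | pred n ih =>
      have h := g.conj_delta_mem ih
      have he : g.Δ⁻¹ * (g.Δ ^ (-(n : ℤ)) * p * g.Δ ^ (-(-(n : ℤ)))) * g.Δ
          = g.Δ ^ (-(n : ℤ) - 1) * p * g.Δ ^ (-(-(n : ℤ) - 1)) := by group
      rwa [he] at h

/-- Nonnegative powers of `Δ` are positive. -/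
lemma delta_zpow_mem {k : ℤ} (hk : 0 ≤ k) : g.Δ ^ k ∈ g.P := by
  obtain ⟨n, rfl⟩ := Int.eq_ofNat_of_zero_le hk
  rw [zpow_natCast]
  exact pow_mem g.delta_pos n

end GarsideGroup

/-- Lemma 2.18: with `v̄ = da`, `w̄ = db`, `d = v̄ ∧ w̄`, `a ∧ b = 1`
and `r = sup a`, one has `sup(∂v̄ ∧ ∂a·τ^r(b)) ≥ r`: the elements `∂v̄` and `∂a·τ^r(b)`
have a common prefix of canonical length at least `r`. -/
theorem GarsideGroup.overlap_of_complements {G : Type*} [Group G] (g : GarsideGroup G)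
    (vb wb a b : G) (hv : g.ginf vb = 0) (hw : g.ginf wb = 0)
    (ha : vb = g.lgcd vb wb * a) (hb : wb = g.lgcd vb wb * b) (hab : g.lgcd a b = 1) :
    g.gsup a ≤ g.gsup (g.lgcd (g.comp vb) (g.comp a * g.tau (g.gsup a) b)) := by
  set d := g.lgcd vb wb with hd
  set r := g.gsup a with hr
  set s := g.gsup vb with hs
  set c := g.lgcd (g.comp vb) (g.comp a * g.tau r b) with hc
  -- `vb`, `wb`, `d` are positive
  have hvP : vb ∈ g.P := by
    have h := g.ginf_dvd vb
    rwa [hv, zpow_zero, inv_one, one_mul] at h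
  have hwP : wb ∈ g.P := by
    have h := g.ginf_dvd wb
    rwa [hw, zpow_zero, inv_one, one_mul] at h
  have hdP : d ∈ g.P := by
    have h := g.lgcd_greatest vb wb 1 (by simpa using hvP) (by simpa using hwP)
    simpa using h
  -- `r ≤ s`
  have hrs : r ≤ s := by
    apply g.gsup_min
    have h1 : vb⁻¹ * g.Δ ^ s ∈ g.P := g.gsup_dvd vb
    have h2 : g.Δ ^ (-s) * d * g.Δ ^ (-(-s)) ∈ g.P := g.zpow_conj_mem (-s) hdP
    have h3 := g.P.mul_mem h1 h2
    have he : vb⁻¹ * g.Δ ^ s * (g.Δ ^ (-s) * d * g.Δ ^ (-(-s))) = a⁻¹ * g.Δ ^ s := by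
      rw [ha]; group
    rwa [he] at h3
  -- the common prefix `z = vb⁻¹ Δ^r`
  set z := vb⁻¹ * g.Δ ^ r with hz
  have hz1 : z⁻¹ * g.comp vb ∈ g.P := by
    have he : z⁻¹ * g.comp vb = g.Δ ^ (s - r) := by
      simp only [hz, comp, ← hs]; group
    rw [he]
    exact g.delta_zpow_mem (by omega)
  have hz2 : z⁻¹ * (g.comp a * g.tau r b) ∈ g.P := by
    have he : z⁻¹ * (g.comp a * g.tau r b) = g.Δ ^ (-r) * wb * g.Δ ^ (-(-r)) := by
      simp only [hz, comp, tau, ← hr]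
      rw [ha, hb]; group
    rw [he]
    exact g.zpow_conj_mem (-r) hwP
  have hzc : z⁻¹ * c ∈ g.P := g.lgcd_greatest _ _ z hz1 hz2
  -- `sup z ≥ r`
  have h1 : r ≤ g.gsup z := by
    have hq := g.gsup_dvd z
    set t := g.gsup z with ht
    have h2 : g.Δ ^ t * (z⁻¹ * g.Δ ^ t) * g.Δ ^ (-t) ∈ g.P := g.zpow_conj_mem t hq
    have he : g.Δ ^ t * (z⁻¹ * g.Δ ^ t) * g.Δ ^ (-t) = (g.Δ ^ (r - t))⁻¹ * vb := by
      simp only [hz]; group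
    rw [he] at h2
    have h3 := g.ginf_max vb (r - t) h2
    omega
  -- `sup z ≤ sup c`
  have h2 : g.gsup z ≤ g.gsup c := by
    apply g.gsup_min
    have h3 := g.P.mul_mem hzc (g.gsup_dvd c)
    rwa [show z⁻¹ * c * (c⁻¹ * g.Δ ^ g.gsup c) = z⁻¹ * g.Δ ^ g.gsup c by group] at h3
  omega
end

section
/- Let n ≥ 4 and let x ∈ B_n⁺ be a positive braid with inf(x) = 0 whose left normal form x₁⋯x_r (r ≥ 2) coincides with its right normal form and whose first and last factors are the single atom σ_⌊(n+1)/2⌋. Let z be a positive braid with inf(z) = 0 and suppose there is a positive integer k such that x^k is a suffix of z and z is a suffix of x^{k+1} (i.e., z = v·x^k and x^{k+1} = w·z for some positive v, w). Then the final segment of length kr of the left normal form of z consists of x^k: the left normal form of z is the juxtaposition of the left normal form of v followed by that of x^k. -/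
namespace GarsideGroup

variable {G : Type*} [Group G]

/-- the vertex set of the additional length complex: cosets `gΔ^ℤ` -/
abbrev Vertex (g : GarsideGroup G) : Type _ := G ⧸ Subgroup.zpowers g.Δ

/-- the vertex represented by a group element -/
def vtx (g : GarsideGroup G) (a : G) : Vertex g := QuotientGroup.mk a

/-- there is an edge from `v` to `w` labelled by a non-trivial, non-`Δ` simple element,
or by an absorbable element -/
def Step (g : GarsideGroup G) (v w : Vertex g) : Prop :=
  (∃ m : G, g.Simple m ∧ m ≠ 1 ∧ m ≠ g.Δ ∧ g.vtx (g.rep v * m) = w) ∨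
  (∃ y : G, g.Absorbable y ∧ g.vtx (g.rep v * y) = w)

/-- the additional length complex `C_AL(G)`, as a graph on `G/⟨Δ⟩` -/
def calGraph (g : GarsideGroup G) : SimpleGraph (Vertex g) where
  Adj v w := v ≠ w ∧ (g.Step v w ∨ g.Step w v)
  symm := ⟨fun _ _ h => ⟨h.1.symm, h.2.symm⟩⟩
  loopless := ⟨fun _ h => h.1 rfl⟩

/-- the additional length metric `d_AL`: the graph distance on `C_AL(G)` (each edge
having length `1`) -/
noncomputable def dAL (g : GarsideGroup G) (v w : Vertex g) : ℕ := (g.calGraph).dist v w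

/-- `l` is a left normal form (of the element `l.prod`, of infimum `0`): all factors are
simple, different from `1` and `Δ`, and each consecutive pair is left-weighted, i.e.
`l[i] = Δ ∧ (l[i] ⋯ l[r])` for all `i`. -/
def IsLNF (g : GarsideGroup G) (l : List G) : Prop :=
  (∀ s ∈ l, g.Simple s ∧ s ≠ 1 ∧ s ≠ g.Δ) ∧
  ∀ (i : ℕ) (h : i < l.length), ∀ c : G,
    g.LDvd c g.Δ → g.LDvd c (l.drop i).prod → g.LDvd c (l.get ⟨i, h⟩)

/-- `l` is a right normal form: all factors are simple, different from `1` and `Δ`, and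
`l[i] = (l[0] ⋯ l[i]) ∧↰ Δ` (right gcd) for all `i`. -/
def IsRNF (g : GarsideGroup G) (l : List G) : Prop :=
  (∀ s ∈ l, g.Simple s ∧ s ≠ 1 ∧ s ≠ g.Δ) ∧
  ∀ (i : ℕ) (h : i < l.length), ∀ c : G,
    g.RDvd c g.Δ → g.RDvd c (l.take (i + 1)).prod → g.RDvd c (l.get ⟨i, h⟩)

/-- the distinguished representative of the coset `(v̄⁻¹w̄)Δ^ℤ` -/
def relRep (g : GarsideGroup G) (v w : Vertex g) : G :=
  g.rep (g.vtx ((g.rep v)⁻¹ * g.rep w))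

/-- the vertices visited by the edge-path starting at `v` whose edges are labelled by
the entries of `l` -/
def pathVertices (g : GarsideGroup G) (v : Vertex g) (l : List G) : List (Vertex g) :=
  (List.range (l.length + 1)).map fun i => g.vtx (g.rep v * (l.take i).prod)

/-- `l` is the list of labels of the preferred path `A(v,w)`: the left normal form of the
distinguished representative of `(v̄⁻¹w̄)Δ^ℤ`.  The vertices visited by `A(v,w)` are then
`g.pathVertices v l`. -/
def IsPrefPath (g : GarsideGroup G) (v w : Vertex g) (l : List G) : Prop :=
  g.IsLNF l ∧ l.prod = g.relRep v w

end GarsideGroup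
section Braid

open FreeGroup in
/-- the braid relations on `n - 1` generators `σ₁, …, σ_{n-1}` (indexed by `Fin (n-1)`):
`σᵢσⱼσᵢ = σⱼσᵢσⱼ` for `|i - j| = 1` and `σᵢσⱼ = σⱼσᵢ` for `|i - j| ≥ 2` -/
def braidRels (n : ℕ) : Set (FreeGroup (Fin (n - 1))) :=
  {r | ∃ i j : Fin (n - 1),
    ((i : ℕ) + 1 = (j : ℕ) ∧ r = of i * of j * of i * (of j * of i * of j)⁻¹) ∨
    ((i : ℕ) + 2 ≤ (j : ℕ) ∧ r = of i * of j * (of j * of i)⁻¹)}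

/-- the braid group `B_n` on `n` strands -/
abbrev BraidGroup (n : ℕ) := PresentedGroup (braidRels n)

/-- the Artin generator `σ_i` of `B_n`, for `1 ≤ i ≤ n - 1` (junk value `1` otherwise) -/
def braidGen (n i : ℕ) : BraidGroup n :=
  if h : 1 ≤ i ∧ i ≤ n - 1 then PresentedGroup.of ⟨i - 1, by omega⟩ else 1

/-- the half twist `Δ = (σ₁)(σ₂σ₁)⋯(σ_{n−1}⋯σ₁)` -/
def braidDelta (n : ℕ) : BraidGroup n :=
  ((List.range (n - 1)).map fun k =>
    ((List.range (k + 1)).map fun j => braidGen n (k + 1 - j)).prod).prod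

/-- the positive braid monoid `B_n⁺`, as the submonoid of `B_n` generated by the `σ_i` -/
def braidMonoid (n : ℕ) : Submonoid (BraidGroup n) :=
  Submonoid.closure {x | ∃ i : ℕ, 1 ≤ i ∧ i ≤ n - 1 ∧ x = braidGen n i}

/-- a Garside structure on `B_n` is the classical one when its positive monoid is the
positive braid monoid and its Garside element is the half twist `Δ` -/
def IsClassicalBraidStructure {n : ℕ} (g : GarsideGroup (BraidGroup n)) : Prop :=
  g.P = braidMonoid n ∧ g.Δ = braidDelta n

end Braid

namespace BraidAux

/-- the length homomorphism -/
def lamHom (n : ℕ) : BraidGroup n →* Multiplicative ℤ :=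
  PresentedGroup.toGroup (f := fun _ => Multiplicative.ofAdd (1:ℤ)) (by
    rintro r ⟨i, j, hr | hr⟩ <;> rw [hr.2] <;>
      simp only [map_mul, map_inv, FreeGroup.lift_apply_of] <;> group)

lemma lam_gen {n i : ℕ} (h1 : 1 ≤ i) (h2 : i ≤ n - 1) :
    lamHom n (braidGen n i) = Multiplicative.ofAdd (1:ℤ) := by
  rw [braidGen, dif_pos ⟨h1, h2⟩, lamHom, PresentedGroup.toGroup.of]

lemma gen_mem {n i : ℕ} (h1 : 1 ≤ i) (h2 : i ≤ n - 1) :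
    braidGen n i ∈ braidMonoid n :=
  Submonoid.subset_closure ⟨i, h1, h2, rfl⟩

lemma exists_word {n : ℕ} {p : BraidGroup n} (hp : p ∈ braidMonoid n) :
    ∃ l : List (BraidGroup n),
      (∀ y ∈ l, ∃ i : ℕ, 1 ≤ i ∧ i ≤ n - 1 ∧ y = braidGen n i) ∧ l.prod = p :=
  Submonoid.exists_list_of_mem_closure hp

lemma lam_word {n : ℕ} (l : List (BraidGroup n))
    (hl : ∀ y ∈ l, ∃ i : ℕ, 1 ≤ i ∧ i ≤ n - 1 ∧ y = braidGen n i) :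
    lamHom n l.prod = Multiplicative.ofAdd (l.length : ℤ) := by
  induction l with
  | nil => simp
  | cons a t ih =>
    obtain ⟨i, h1, h2, rfl⟩ := hl a (by simp)
    rw [List.prod_cons, map_mul, lam_gen h1 h2, ih (fun y hy => hl y (by simp [hy]))]
    rw [← ofAdd_add]
    congr 1
    simp
    ring

lemma lam_nat {n : ℕ} {p : BraidGroup n} (hp : p ∈ braidMonoid n) :
    ∃ N : ℕ, lamHom n p = Multiplicative.ofAdd (N : ℤ) ∧ (N = 0 → p = 1) := by
  obtain ⟨l, hl, hprod⟩ := exists_word hp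
  exact ⟨l.length, by rw [← hprod]; exact lam_word l hl, fun h => by
    rw [← hprod, List.length_eq_zero_iff.mp h, List.prod_nil]⟩

/-- left divisors of a generator are trivial -/
lemma gen_dvd_left {n i : ℕ} (h1 : 1 ≤ i) (h2 : i ≤ n - 1) {e : BraidGroup n}
    (heP : e ∈ braidMonoid n) (hd : e⁻¹ * braidGen n i ∈ braidMonoid n) :
    e = 1 ∨ e = braidGen n i := by
  obtain ⟨N, hN, hN0⟩ := lam_nat heP
  obtain ⟨M, hM, hM0⟩ := lam_nat hd
  have : lamHom n (braidGen n i) = lamHom n e * lamHom n (e⁻¹ * braidGen n i) := by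
    rw [← map_mul]; group
  rw [lam_gen h1 h2, hN, hM, ← ofAdd_add] at this
  have hNM : (1:ℤ) = (N:ℤ) + (M:ℤ) := by exact_mod_cast Multiplicative.ofAdd.injective this
  rcases Nat.eq_zero_or_pos N with h | h
  · exact Or.inl (hN0 h)
  · have : M = 0 := by omega
    have := hM0 this
    right
    have h1' : e⁻¹ * braidGen n i = 1 := this
    have : braidGen n i = e := by
      have := congrArg (fun y => e * y) h1'
      simpa [mul_assoc] using this
    exact this.symm

/-- right divisors of a generator are trivial -/
lemma gen_dvd_right {n i : ℕ} (h1 : 1 ≤ i) (h2 : i ≤ n - 1) {f : BraidGroup n}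
    (hfP : f ∈ braidMonoid n) (hd : braidGen n i * f⁻¹ ∈ braidMonoid n) :
    f = 1 ∨ f = braidGen n i := by
  obtain ⟨N, hN, hN0⟩ := lam_nat hfP
  obtain ⟨M, hM, hM0⟩ := lam_nat hd
  have : lamHom n (braidGen n i) = lamHom n (braidGen n i * f⁻¹) * lamHom n f := by
    rw [← map_mul]; group
  rw [lam_gen h1 h2, hN, hM, ← ofAdd_add] at this
  have hNM : (1:ℤ) = (M:ℤ) + (N:ℤ) := by exact_mod_cast Multiplicative.ofAdd.injective this
  rcases Nat.eq_zero_or_pos N with h | h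
  · exact Or.inl (hN0 h)
  · have : M = 0 := by omega
    have := hM0 this
    right
    have h1' : braidGen n i * f⁻¹ = 1 := this
    have : braidGen n i = f := by
      have := congrArg (fun y => y * f) h1'
      simpa [mul_assoc] using this
    exact this.symm

end BraidAux

namespace BraidAux3

def sp (n k : ℕ) : Equiv.Perm (Fin n) :=
  if h : k + 1 < n then Equiv.swap ⟨k, by omega⟩ ⟨k + 1, by omega⟩ else 1

lemma sp_apply (n k : ℕ) (h : k + 1 < n) (t : Fin n) :
    ((sp n k) t).val = if t.val = k then k + 1 else if t.val = k + 1 then k else t.val := by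
  rw [sp, dif_pos h]
  rcases eq_or_ne t.val k with h1 | h1
  · have ht : t = ⟨k, by omega⟩ := Fin.ext h1
    rw [ht, Equiv.swap_apply_left]
    simp [h1]
  · rcases eq_or_ne t.val (k + 1) with h2 | h2
    · have ht : t = ⟨k + 1, by omega⟩ := Fin.ext h2
      rw [ht, Equiv.swap_apply_right]
      simp [h1, h2]
    · rw [Equiv.swap_apply_of_ne_of_ne (fun hh => h1 (by rw [hh])) (fun hh => h2 (by rw [hh]))]
      simp [h1, h2]

lemma sp_mul_self (n k : ℕ) : sp n k * sp n k = 1 := by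
  rw [sp]
  split_ifs with h
  · exact Equiv.swap_mul_self _ _
  · simp

end BraidAux3

namespace BraidAux3
open BraidAux

set_option maxHeartbeats 4000000 in
def permHom (n : ℕ) : BraidGroup n →* Equiv.Perm (Fin n) :=
  PresentedGroup.toGroup (f := fun i => sp n i.val) (by
    rintro r ⟨i, j, ⟨hij, hr⟩ | ⟨hij, hr⟩⟩ <;> subst hr <;>
      simp only [map_mul, map_inv, FreeGroup.lift_apply_of] <;> rw [mul_inv_eq_one]
    · -- braid relation
      have hbi : i.val + 1 < n := by have := j.isLt; omega
      have hbj : j.val + 1 < n := by have := j.isLt; omega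
      ext t
      simp only [Equiv.Perm.mul_apply, sp_apply n i.val hbi, sp_apply n j.val hbj]
      split_ifs <;> omega
    · -- commutation
      have hbi : i.val + 1 < n := by have := j.isLt; omega
      have hbj : j.val + 1 < n := by have := j.isLt; omega
      ext t
      simp only [Equiv.Perm.mul_apply, sp_apply n i.val hbi, sp_apply n j.val hbj]
      split_ifs <;> omega)

lemma perm_gen {n i : ℕ} (h1 : 1 ≤ i) (h2 : i ≤ n - 1) :
    permHom n (braidGen n i) = sp n (i - 1) := by
  rw [braidGen, dif_pos ⟨h1, h2⟩, permHom, PresentedGroup.toGroup.of]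

def bw (n k : ℕ) : BraidGroup n :=
  ((List.range (k + 1)).map fun j => braidGen n (k + 1 - j)).prod

lemma braidDelta_eq (n : ℕ) : braidDelta n = ((List.range (n - 1)).map (bw n)).prod := rfl

lemma bw_succ (n k : ℕ) : bw n (k + 1) = braidGen n (k + 2) * bw n k := by
  rw [bw, List.range_succ_eq_map, List.map_cons, List.prod_cons, List.map_map]
  congr 1
  have : (fun j => braidGen n (k + 1 + 1 - j)) ∘ Nat.succ = fun j => braidGen n (k + 1 - j) := by
    funext j
    simp only [Function.comp_apply]
    congr 1
    omega
  rw [this, bw]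

lemma perm_bw (n k : ℕ) (hk : k + 1 ≤ n - 1) (t : Fin n) :
    ((permHom n (bw n k)) t).val =
      if t.val = 0 then k + 1 else if t.val ≤ k + 1 then t.val - 1 else t.val := by
  induction k generalizing t with
  | zero =>
    have : bw n 0 = braidGen n 1 := by
      rw [bw]
      simp [List.range_succ]
    rw [this, perm_gen le_rfl (by omega), sp_apply n 0 (by omega)]
    split_ifs <;> omega
  | succ k ih =>
    have hk' : k + 1 ≤ n - 1 := by omega
    rw [bw_succ, map_mul, perm_gen (by omega) (by omega : k + 2 ≤ n - 1)]
    have : k + 2 - 1 = k + 1 := by omega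
    rw [this, Equiv.Perm.mul_apply, sp_apply n (k + 1) (by omega), ih hk']
    have := t.isLt
    split_ifs <;> omega

lemma perm_range' (n : ℕ) : ∀ b a, a + b ≤ n - 1 → ∀ t : Fin n,
    ((permHom n (((List.range' a b).map (bw n)).prod)) t).val =
      if t.val < b then a + b - t.val else if t.val ≤ a + b then t.val - b else t.val := by
  intro b
  induction b with
  | zero =>
    intro a ha t
    simp only [List.range', List.map_nil, List.prod_nil, map_one, Equiv.Perm.one_apply]
    split_ifs <;> omega
  | succ b ih =>
    intro a ha t
    rw [List.range'_succ, List.map_cons, List.prod_cons, map_mul, Equiv.Perm.mul_apply]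
    have h1 : a + 1 ≤ n - 1 := by omega
    rw [perm_bw n a h1]
    rw [ih (a + 1) (by omega) t]
    have := t.isLt
    split_ifs <;> omega

lemma perm_delta (n : ℕ) (t : Fin n) :
    ((permHom n (braidDelta n)) t).val = n - 1 - t.val := by
  rw [braidDelta_eq, List.range_eq_range', perm_range' n (n - 1) 0 (by omega) t]
  have := t.isLt
  split_ifs <;> omega

end BraidAux3

namespace InvPart
open BraidAux BraidAux3

def invSet (n : ℕ) (q : Equiv.Perm (Fin n)) : Finset (Fin n × Fin n) :=
  Finset.univ.filter fun p => p.1.val < p.2.val ∧ (q p.2).val < (q p.1).val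

lemma invSet_one (n : ℕ) : invSet n 1 = ∅ := by
  ext p
  rw [invSet, Finset.mem_filter]
  simp only [Finset.mem_filter, Finset.mem_univ, true_and, Equiv.Perm.one_apply,
    Finset.notMem_empty, iff_false]
  omega

lemma invSet_sp_le (n j : ℕ) (hj : j + 1 < n) (q : Equiv.Perm (Fin n)) :
    (invSet n (sp n j * q)).card ≤ (invSet n q).card + 1 := by
  have hsub : invSet n (sp n j * q) ⊆
      insert (q⁻¹ ⟨j, by omega⟩, q⁻¹ ⟨j + 1, hj⟩) (invSet n q) := by
    intro p hp
    rw [invSet, Finset.mem_filter] at hp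
    simp only [Finset.mem_filter, Finset.mem_univ, true_and,
      Equiv.Perm.mul_apply] at hp
    obtain ⟨hlt, hinv⟩ := hp
    rw [Finset.mem_insert]
    by_cases h2 : (q p.2).val < (q p.1).val
    · right
      simp only [invSet, Finset.mem_filter, Finset.mem_univ, true_and]
      exact ⟨hlt, h2⟩
    · left
      push_neg at h2
      have hne : (q p.1).val ≠ (q p.2).val := by
        intro h
        have h' : p.1 = p.2 := q.injective (Fin.ext h)
        have := congrArg Fin.val h'
        omega
      rw [sp_apply n j hj, sp_apply n j hj] at hinv
      have e1 : (q p.1).val = j ∧ (q p.2).val = j + 1 := by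
        split_ifs at hinv <;> omega
      have e2 : q p.1 = ⟨j, by omega⟩ := Fin.ext e1.1
      have e3 : q p.2 = ⟨j + 1, hj⟩ := Fin.ext e1.2
      have hp1 : p.1 = q⁻¹ ⟨j, by omega⟩ := by
        rw [Equiv.Perm.inv_def, Equiv.eq_symm_apply]
        exact e2
      have hp2 : p.2 = q⁻¹ ⟨j + 1, hj⟩ := by
        rw [Equiv.Perm.inv_def, Equiv.eq_symm_apply]
        exact e3
      rw [Prod.ext_iff]
      exact ⟨hp1, hp2⟩
  exact (Finset.card_le_card hsub).trans (Finset.card_insert_le _ _)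

lemma invSet_word (n : ℕ) (l : List (BraidGroup n))
    (hl : ∀ y ∈ l, ∃ i : ℕ, 1 ≤ i ∧ i ≤ n - 1 ∧ y = braidGen n i) :
    (invSet n (permHom n l.prod)).card ≤ l.length := by
  induction l with
  | nil => simp [invSet_one]
  | cons a t ih =>
    obtain ⟨i, h1, h2, rfl⟩ := hl a (by simp)
    rw [List.prod_cons, map_mul, perm_gen h1 h2]
    have hb : (i - 1) + 1 < n := by omega
    calc (invSet n (sp n (i - 1) * permHom n t.prod)).card
        ≤ (invSet n (permHom n t.prod)).card + 1 := invSet_sp_le n (i - 1) hb _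
      _ ≤ t.length + 1 := by
          have := ih (fun y hy => hl y (by simp [hy]))
          omega
      _ = (braidGen n i :: t).length := by simp

lemma invSet_delta (n : ℕ) :
    invSet n (permHom n (braidDelta n)) =
      Finset.univ.filter fun p : Fin n × Fin n => p.1.val < p.2.val := by
  apply Finset.filter_congr
  intro p _
  rw [perm_delta, perm_delta]
  have := p.1.isLt
  have := p.2.isLt
  constructor
  · intro h; exact h.1
  · intro h; exact ⟨h, by omega⟩

lemma card_lt_pairs (n : ℕ) :
    (Finset.univ.filter fun p : Fin n × Fin n => p.1.val < p.2.val).card * 2 = n * n - n := by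
  have hST : (Finset.univ.filter fun p : Fin n × Fin n => p.1.val < p.2.val).card =
      (Finset.univ.filter fun p : Fin n × Fin n => p.2.val < p.1.val).card := by
    refine Finset.card_bij' (fun p _ => (p.2, p.1)) (fun p _ => (p.2, p.1)) ?_ ?_ ?_ ?_
    · intro a ha
      simp only [Finset.mem_filter, Finset.mem_univ, true_and] at ha ⊢
      exact ha
    · intro a ha
      simp only [Finset.mem_filter, Finset.mem_univ, true_and] at ha ⊢
      exact ha
    · intro a _
      exact Prod.mk.eta
    · intro a _
      exact Prod.mk.eta
  have hDcard : (Finset.univ.filter fun p : Fin n × Fin n => p.1.val = p.2.val).card = n := by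
    have : (Finset.univ.filter fun p : Fin n × Fin n => p.1.val = p.2.val).card =
        (Finset.univ : Finset (Fin n)).card := by
      refine Finset.card_bij' (fun p _ => p.1) (fun a _ => (a, a)) ?_ ?_ ?_ ?_
      · intro a _
        exact Finset.mem_univ _
      · intro a _
        simp only [Finset.mem_filter, Finset.mem_univ, true_and]
      · intro a ha
        simp only [Finset.mem_filter, Finset.mem_univ, true_and] at ha
        rw [Prod.ext_iff]
        exact ⟨rfl, Fin.ext ha⟩
      · intro a _
        rfl
    rw [this]
    simp
  have h2 : (Finset.univ.filter fun p : Fin n × Fin n => ¬ p.1.val < p.2.val) =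
      (Finset.univ.filter fun p : Fin n × Fin n => p.2.val < p.1.val) ∪
      (Finset.univ.filter fun p : Fin n × Fin n => p.1.val = p.2.val) := by
    ext p
    simp only [Finset.mem_filter, Finset.mem_univ, true_and, Finset.mem_union]
    omega
  have h3 : Disjoint (Finset.univ.filter fun p : Fin n × Fin n => p.2.val < p.1.val)
      (Finset.univ.filter fun p : Fin n × Fin n => p.1.val = p.2.val) := by
    rw [Finset.disjoint_left]
    intro p hp hp'
    simp only [Finset.mem_filter, Finset.mem_univ, true_and] at hp hp'
    omega
  have h1 := Finset.card_filter_add_card_filter_not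
    (s := (Finset.univ : Finset (Fin n × Fin n))) (p := fun p => p.1.val < p.2.val)
  rw [h2, Finset.card_union_of_disjoint h3] at h1
  have hu : (Finset.univ : Finset (Fin n × Fin n)).card = n * n := by
    simp [Finset.card_univ]
  rw [hu, hDcard] at h1
  have hn : n ≤ n * n := by
    rcases n with _ | m
    · simp
    · nlinarith
  generalize hM : n * n = M at h1 hn ⊢
  omega

def deltaWord (n : ℕ) : List (BraidGroup n) :=
  ((List.range (n - 1)).map fun k => (List.range (k + 1)).map fun j => braidGen n (k + 1 - j)).flatten

lemma deltaWord_prod (n : ℕ) : (deltaWord n).prod = braidDelta n := by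
  rw [deltaWord, List.prod_flatten, braidDelta, List.map_map]
  rfl

lemma deltaWord_gens (n : ℕ) :
    ∀ y ∈ deltaWord n, ∃ i : ℕ, 1 ≤ i ∧ i ≤ n - 1 ∧ y = braidGen n i := by
  intro y hy
  rw [deltaWord, List.mem_flatten] at hy
  obtain ⟨l, hl, hyl⟩ := hy
  rw [List.mem_map] at hl
  obtain ⟨k, hk, rfl⟩ := hl
  rw [List.mem_range] at hk
  rw [List.mem_map] at hyl
  obtain ⟨j, hj, rfl⟩ := hyl
  rw [List.mem_range] at hj
  exact ⟨k + 1 - j, by omega, by omega, rfl⟩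

lemma deltaWord_len (n : ℕ) : (deltaWord n).length * 2 = n * n - n := by
  have h1 : ∀ m : ℕ, ((List.range m).map (List.length ∘ fun k =>
      (List.range (k + 1)).map fun j => braidGen n (k + 1 - j))).sum
        = ∑ k ∈ Finset.range m, (k + 1) := by
    intro m
    induction m with
    | zero => simp
    | succ m ih =>
      rw [List.range_succ, List.map_append, List.sum_append, ih, Finset.sum_range_succ]
      simp
  rw [deltaWord, List.length_flatten, List.map_map]
  rcases n with _ | m
  · simp
  · rw [h1]
    have h2 : ∑ k ∈ Finset.range (m + 1), (k : ℕ) = ∑ k ∈ Finset.range m, (k + 1) := by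
      rw [Finset.sum_range_succ' (fun k => k) m]
      simp
    have h3 : m + 1 - 1 = m := rfl
    rw [h3, ← h2, Finset.sum_range_id_mul_two (m + 1)]
    simp only [Nat.add_sub_cancel]
    have h4 : (m + 1) * (m + 1) = (m + 1) * m + (m + 1) := by ring
    omega

lemma sq_free {n : ℕ} {i : ℕ} (h1 : 1 ≤ i) (h2 : i ≤ n - 1)
    (h : (braidGen n i * braidGen n i)⁻¹ * braidDelta n ∈ braidMonoid n) : False := by
  obtain ⟨l, hl, hprod⟩ := exists_word h
  have hΔ : braidDelta n = braidGen n i * braidGen n i * l.prod := by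
    rw [hprod]
    group
  -- length comparison via lamHom
  have hlam1 : lamHom n (braidDelta n) =
      Multiplicative.ofAdd (((deltaWord n).length : ℤ)) := by
    rw [← deltaWord_prod, lam_word _ (deltaWord_gens n)]
  have hlam2 : lamHom n (braidDelta n) =
      Multiplicative.ofAdd ((2 + l.length : ℕ) : ℤ) := by
    rw [hΔ, map_mul, map_mul, lam_gen h1 h2, lam_word l hl, ← ofAdd_add, ← ofAdd_add]
    congr 1
    try push_cast
    try ring
  have hlen : (deltaWord n).length = 2 + l.length := by
    rw [hlam1] at hlam2
    have := Multiplicative.ofAdd.injective hlam2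
    exact_mod_cast this
  -- permutation comparison
  have hperm : permHom n (braidDelta n) = permHom n l.prod := by
    have e : permHom n (braidDelta n) = sp n (i - 1) * sp n (i - 1) * permHom n l.prod := by
      rw [hΔ, map_mul, map_mul, perm_gen h1 h2]
    rw [e, sp_mul_self, one_mul]
  have hcount := invSet_word n l hl
  rw [← hperm] at hcount
  have hdelta : (invSet n (permHom n (braidDelta n))).card * 2 = n * n - n := by
    rw [invSet_delta]
    exact card_lt_pairs n
  have hdw := deltaWord_len n
  omega

end InvPart


namespace GarsideAux

variable {G : Type*} [Group G]

lemma tau_pos (g : GarsideGroup G) : ∀ p ∈ g.P, g.Δ⁻¹ * p * g.Δ ∈ g.P := by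
  intro p hp
  have h := g.simples_generate p hp
  refine Submonoid.closure_induction ?_ ?_ ?_ h
  · rintro s ⟨hsP, hsΔ⟩
    have h2 : (s⁻¹ * g.Δ) ∈ g.P ∧ g.Δ * (s⁻¹ * g.Δ)⁻¹ ∈ g.P := by
      refine ⟨hsΔ, ?_⟩
      have e : g.Δ * (s⁻¹ * g.Δ)⁻¹ = s := by group
      rw [e]
      exact hsP
    have h3 := (g.simples_symm (s⁻¹ * g.Δ)).mpr h2
    have e : g.Δ⁻¹ * s * g.Δ = (s⁻¹ * g.Δ)⁻¹ * g.Δ := by group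
    rw [e]
    exact h3.2
  · have e : g.Δ⁻¹ * 1 * g.Δ = 1 := by group
    rw [e]
    exact g.P.one_mem
  · intro a b _ _ ha hb
    have e : g.Δ⁻¹ * (a * b) * g.Δ = (g.Δ⁻¹ * a * g.Δ) * (g.Δ⁻¹ * b * g.Δ) := by group
    rw [e]
    exact g.P.mul_mem ha hb

lemma lemH (g : GarsideGroup G) (c A B : G) (hc : c⁻¹ * g.Δ ∈ g.P) (hA : A ∈ g.P)
    (hB : B ∈ g.P) (h : c⁻¹ * (A * B) ∈ g.P) :
    ∃ e, e ∈ g.P ∧ e⁻¹ * g.Δ ∈ g.P ∧ e⁻¹ * B ∈ g.P ∧ c⁻¹ * (A * e) ∈ g.P := by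
  obtain ⟨mm, hcm, hAm, hmin⟩ := g.llcm_exists c A
  have hm1 : mm⁻¹ * (A * B) ∈ g.P := by
    refine hmin _ h ?_
    have e : A⁻¹ * (A * B) = B := by group
    rw [e]
    exact hB
  have hm2 : mm⁻¹ * (A * g.Δ) ∈ g.P := by
    refine hmin _ ?_ ?_
    · have e : c⁻¹ * (A * g.Δ) = (c⁻¹ * g.Δ) * (g.Δ⁻¹ * A * g.Δ) := by group
      rw [e]
      exact g.P.mul_mem hc (tau_pos g A hA)
    · have e : A⁻¹ * (A * g.Δ) = g.Δ := by group
      rw [e]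
      exact g.delta_pos
  refine ⟨A⁻¹ * mm, hAm, ?_, ?_, ?_⟩
  · have e : (A⁻¹ * mm)⁻¹ * g.Δ = mm⁻¹ * (A * g.Δ) := by group
    rw [e]
    exact hm2
  · have e : (A⁻¹ * mm)⁻¹ * B = mm⁻¹ * (A * B) := by group
    rw [e]
    exact hm1
  · have e : c⁻¹ * (A * (A⁻¹ * mm)) = c⁻¹ * mm := by group
    rw [e]
    exact hcm

lemma trick (g : GarsideGroup G) (σ c f : G) (hσP : σ ∈ g.P) (hc : c⁻¹ * g.Δ ∈ g.P)
    (hfP : f ∈ g.P) (hfΔ : f⁻¹ * g.Δ ∈ g.P) (h : c⁻¹ * (f * σ) ∈ g.P)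
    (hdich : ∀ e', e' ∈ g.P → e'⁻¹ * σ ∈ g.P → e' = 1 ∨ e' = σ) :
    c⁻¹ * f ∈ g.P ∨ (f * σ)⁻¹ * g.Δ ∈ g.P := by
  obtain ⟨mm, hcm, hfm, hmin⟩ := g.llcm_exists c f
  have h1 : mm⁻¹ * (f * σ) ∈ g.P := by
    refine hmin _ h ?_
    have e : f⁻¹ * (f * σ) = σ := by group
    rw [e]
    exact hσP
  have he'σ : (f⁻¹ * mm)⁻¹ * σ ∈ g.P := by
    have e : (f⁻¹ * mm)⁻¹ * σ = mm⁻¹ * (f * σ) := by group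
    rw [e]
    exact h1
  rcases hdich (f⁻¹ * mm) hfm he'σ with h2 | h2
  · left
    have hmf : mm = f := by
      have h3 := congrArg (fun y => f * y) h2
      simpa [mul_assoc] using h3
    rw [← hmf]
    exact hcm
  · right
    have hmfσ : mm = f * σ := by
      have h3 := congrArg (fun y => f * y) h2
      simp only [mul_inv_cancel_left] at h3
      exact h3
    have h4 := hmin g.Δ hc hfΔ
    rw [hmfσ] at h4
    exact h4

lemma masterU (g : GarsideGroup G) (σm x : G) (L : List G) (hLne : L ≠ [])
    (hLP : ∀ s ∈ L, s ∈ g.P) (hLlast : L.getLast hLne = σm) (hLprod : L.prod = x)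
    (hxP : x ∈ g.P)
    (hfirstprop : ∀ c, c⁻¹ * g.Δ ∈ g.P → c⁻¹ * x ∈ g.P → c⁻¹ * σm ∈ g.P)
    (hσP : σm ∈ g.P) (hσΔ : σm⁻¹ * g.Δ ∈ g.P)
    (hdich : ∀ e', e' ∈ g.P → e'⁻¹ * σm ∈ g.P → e' = 1 ∨ e' = σm)
    (hsq : (σm * σm)⁻¹ * g.Δ ∈ g.P → False) :
    ∀ (k : ℕ) (M : List G) (hMne : M ≠ []), (∀ s ∈ M, s ∈ g.P) →
      M.getLast hMne = σm → ∀ c, c⁻¹ * g.Δ ∈ g.P → c⁻¹ * (M.prod * x ^ k) ∈ g.P →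
        c⁻¹ * M.prod ∈ g.P := by
  intro k
  induction k with
  | zero =>
    intro M hMne hMP hMlast c hc h
    simpa using h
  | succ k ih =>
    intro M
    induction M with
    | nil => intro hMne; exact absurd rfl hMne
    | cons a M' ihM =>
      intro hMne hMP hMlast c hc h
      rcases eq_or_ne M' [] with hM' | hM'
      · subst hM'
        have ha : a = σm := by simpa using hMlast
        subst ha
        have hP : c⁻¹ * (a * x ^ (k + 1)) ∈ g.P := by
          have e : ([a] : List G).prod = a := by simp
          rw [e] at h
          exact h
        obtain ⟨e, heP, heΔ, heB, hce⟩ :=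
          lemH g c a (x ^ (k + 1)) hc hσP (pow_mem hxP _) hP
        have heB' : e⁻¹ * (L.prod * x ^ k) ∈ g.P := by
          rw [hLprod]
          have e2 : x * x ^ k = x ^ (k + 1) := (pow_succ' x k).symm
          rw [← e2, ← mul_assoc] at heB
          rw [← mul_assoc]
          exact heB
        have hex : e⁻¹ * x ∈ g.P := by
          rw [← hLprod]
          exact ih L hLne hLP hLlast e heΔ heB'
        have heσ : e⁻¹ * a ∈ g.P := hfirstprop e heΔ hex
        rcases hdich e heP heσ with he1 | he1
        · subst he1
          have e2 : ([a] : List G).prod = a := by simp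
          rw [e2]
          simpa using hce
        · subst he1
          rcases trick g e c e hσP hc hσP hσΔ hce hdich with h2 | h2
          · have e2 : ([e] : List G).prod = e := by simp
            rw [e2]
            exact h2
          · exact absurd h2 hsq
      · have hlast' : M'.getLast hM' = σm := by
          rw [← hMlast]
          exact (List.getLast_cons hM').symm
        have hP : c⁻¹ * (a * (M'.prod * x ^ (k + 1))) ∈ g.P := by
          have e : (a :: M').prod * x ^ (k + 1) = a * (M'.prod * x ^ (k + 1)) := by
            rw [List.prod_cons, mul_assoc]
          rw [e] at h
          exact h
        have hM'P : M'.prod ∈ g.P :=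
          Submonoid.list_prod_mem _ (fun s hs => hMP s (by simp [hs]))
        obtain ⟨e, heP, heΔ, heB, hce⟩ :=
          lemH g c a (M'.prod * x ^ (k + 1)) hc (hMP a (by simp))
            (g.P.mul_mem hM'P (pow_mem hxP _)) hP
        have hrec := ihM hM' (fun s hs => hMP s (by simp [hs])) hlast' e heΔ heB
        have hrw : c⁻¹ * ((a :: M').prod) = (c⁻¹ * (a * e)) * (e⁻¹ * M'.prod) := by
          rw [List.prod_cons]
          group
        rw [hrw]
        exact g.P.mul_mem hce hrec

end GarsideAux

namespace FinalAux

lemma getLast_drop {α : Type*} : ∀ (l : List α) (i : ℕ) (h : l.drop i ≠ []) (h' : l ≠ []),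
    (l.drop i).getLast h = l.getLast h' := by
  intro l
  induction l with
  | nil => intro i h h'; exact absurd rfl h'
  | cons a t ih =>
    intro i h h'
    cases i with
    | zero => rfl
    | succ i =>
      have hdt : (a :: t).drop (i + 1) = t.drop i := rfl
      have ht : t ≠ [] := by
        intro e
        rw [hdt, e] at h
        simp at h
      rw [List.getLast_cons ht]
      exact ih i h ht

end FinalAux

/-- Proposition 3.12: let `x ∈ B_n⁺` (`n ≥ 4`) have `inf x = 0`, with
left normal form `L` (length `r ≥ 2`) coinciding with its right normal form and first and
last factors the atom `σ_⌊(n+1)/2⌋`.  If `z` is a positive braid of infimum `0` with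
`z = v·x^k` and `x^{k+1} = w·z` for some positive `v, w` and `k ≥ 1`, then the left
normal form of `z` is the juxtaposition of the left normal form of `v` followed by that
of `x^k`; in particular the final segment of length `k·r` of the left normal form of `z`
consists of `x^k`. -/


theorem BraidGroup.final_segment_power {n : ℕ} (hn : 4 ≤ n)
    (g : GarsideGroup (BraidGroup n)) (hg : IsClassicalBraidStructure g)
    (x : BraidGroup n) (hxP : x ∈ g.P) (hxinf : g.ginf x = 0)
    (L : List (BraidGroup n)) (hL : g.IsLNF L) (hLr : g.IsRNF L) (hLx : L.prod = x)
    (hlen : 2 ≤ L.length)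
    (hfirst : L.head? = some (braidGen n ((n + 1) / 2)))
    (hlast : L.getLast? = some (braidGen n ((n + 1) / 2)))
    (z v w : BraidGroup n) (hzP : z ∈ g.P) (hzinf : g.ginf z = 0)
    (hvP : v ∈ g.P) (hwP : w ∈ g.P) (k : ℕ) (hk : 1 ≤ k)
    (hz1 : z = v * x ^ k) (hz2 : x ^ (k + 1) = w * z) :
    ∀ Lv Lxk : List (BraidGroup n),
      g.IsLNF Lv → Lv.prod = v → g.IsLNF Lxk → Lxk.prod = x ^ k →
        g.IsLNF (Lv ++ Lxk) ∧ (Lv ++ Lxk).prod = z := by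
  obtain ⟨hP, hΔ⟩ := hg
  have hm1 : 1 ≤ (n + 1) / 2 := by omega
  have hm2 : (n + 1) / 2 ≤ n - 1 := by omega
  set σm := braidGen n ((n + 1) / 2) with hσm
  have hLne : L ≠ [] := by
    intro hnil
    rw [hnil] at hlen
    simp at hlen
  have h0 : 0 < L.length := by omega
  have hheadget : L.get ⟨0, h0⟩ = σm := by
    have h1 := List.head?_eq_getElem? (l := L)
    rw [List.getElem?_eq_getElem h0] at h1
    have h2 := hfirst.symm.trans h1
    injection h2 with h3
    rw [List.get_eq_getElem]
    exact h3.symm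
  have hgetlast : L.getLast hLne = σm := by
    have h1 := List.getLast?_eq_getLast hLne
    rw [hlast] at h1
    injection h1 with h2
    exact h2.symm
  have hσmem : σm ∈ L := by
    rw [← hgetlast]
    exact List.getLast_mem hLne
  obtain ⟨hσSimple, hσne1, hσneΔ⟩ := hL.1 σm hσmem
  have hσP : σm ∈ g.P := hσSimple.1
  have hσΔ : σm⁻¹ * g.Δ ∈ g.P := hσSimple.2
  have hdich : ∀ e', e' ∈ g.P → e'⁻¹ * σm ∈ g.P → e' = 1 ∨ e' = σm := by
    intro e' h1 h2
    rw [hP] at h1 h2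
    exact BraidAux.gen_dvd_left hm1 hm2 h1 h2
  have hdichR : ∀ f, f ∈ g.P → σm * f⁻¹ ∈ g.P → f = 1 ∨ f = σm := by
    intro f h1 h2
    rw [hP] at h1 h2
    exact BraidAux.gen_dvd_right hm1 hm2 h1 h2
  have hsq : (σm * σm)⁻¹ * g.Δ ∈ g.P → False := by
    intro h
    rw [hP, hΔ] at h
    exact InvPart.sq_free hm1 hm2 h
  have hLP : ∀ s ∈ L, s ∈ g.P := fun s hs => (hL.1 s hs).1.1
  have hfirstprop : ∀ c, c⁻¹ * g.Δ ∈ g.P → c⁻¹ * x ∈ g.P → c⁻¹ * σm ∈ g.P := by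
    intro c h1 h2
    have h3 := hL.2 0 h0 c h1 (by
      show c⁻¹ * (L.drop 0).prod ∈ g.P
      rw [List.drop_zero, hLx]
      exact h2)
    rw [hheadget] at h3
    exact h3
  intro Lv Lxk hLv hLvprod hLxk hLxkprod
  have hxwv : x = w * v := by
    have e1 : x * x ^ k = (w * v) * x ^ k := by
      rw [← pow_succ' x k, hz2, hz1, mul_assoc]
    exact mul_right_cancel e1
  constructor
  · constructor
    · intro s hs
      rcases List.mem_append.mp hs with h | h
      · exact hLv.1 s h
      · exact hLxk.1 s h
    · by_cases hLvnil : Lv = []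
      · subst hLvnil
        exact hLxk.2
      · have hflast : Lv.getLast hLvnil = σm := by
          have hfmem : Lv.getLast hLvnil ∈ Lv := List.getLast_mem hLvnil
          obtain ⟨hfSimple, hfne1, -⟩ := hLv.1 _ hfmem
          have hfP : Lv.getLast hLvnil ∈ g.P := hfSimple.1
          have hfΔ : (Lv.getLast hLvnil)⁻¹ * g.Δ ∈ g.P := hfSimple.2
          have hfRΔ : g.Δ * (Lv.getLast hLvnil)⁻¹ ∈ g.P :=
            ((g.simples_symm _).mp ⟨hfP, hfΔ⟩).2
          have hvf : Lv.dropLast.prod * Lv.getLast hLvnil = v := by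
            rw [← hLvprod]
            conv_rhs => rw [← List.dropLast_append_getLast hLvnil]
            rw [List.prod_append, List.prod_singleton]
          have hdlpP : Lv.dropLast.prod ∈ g.P :=
            Submonoid.list_prod_mem _
              (fun s hs => (hLv.1 s ((List.dropLast_sublist Lv).subset hs)).1.1)
          have hfRx : x * (Lv.getLast hLvnil)⁻¹ ∈ g.P := by
            have e : x * (Lv.getLast hLvnil)⁻¹ = w * Lv.dropLast.prod := by
              rw [hxwv, ← hvf]
              group
            rw [e]
            exact g.P.mul_mem hwP hdlpP
          have hrlt : L.length - 1 < L.length := by omega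
          have h3 := hLr.2 (L.length - 1) hrlt (Lv.getLast hLvnil) hfRΔ (by
            show (List.take (L.length - 1 + 1) L).prod * (Lv.getLast hLvnil)⁻¹ ∈ g.P
            have e : L.length - 1 + 1 = L.length := by omega
            rw [e, List.take_length, hLx]
            exact hfRx)
          have hgl : L.get ⟨L.length - 1, hrlt⟩ = σm := by
            rw [List.get_eq_getElem, ← List.getLast_eq_getElem hLne]
            exact hgetlast
          rw [hgl] at h3
          rcases hdichR _ hfP h3 with h4 | h4
          · exact absurd h4 hfne1
          · exact h4
        have key : ∀ i, i < Lv.length → ∀ c, c⁻¹ * g.Δ ∈ g.P →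
            c⁻¹ * ((Lv.drop i).prod * x ^ k) ∈ g.P → c⁻¹ * (Lv.drop i).prod ∈ g.P := by
          intro i hi c hc h
          have hdropne : Lv.drop i ≠ [] := by
            apply List.ne_nil_of_length_pos
            rw [List.length_drop]
            omega
          refine GarsideAux.masterU g σm x L hLne hLP hgetlast hLx hxP hfirstprop hσP hσΔ
            hdich hsq k (Lv.drop i) hdropne ?_ ?_ c hc h
          · intro s hs
            exact (hLv.1 s ((List.drop_sublist i Lv).subset hs)).1.1
          · rw [FinalAux.getLast_drop Lv i hdropne hLvnil]
            exact hflast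
        intro i hilt c hcΔ hcdvd
        have hlen' : (Lv ++ Lxk).length = Lv.length + Lxk.length := List.length_append
        by_cases hi : i < Lv.length
        · have hdrop : (Lv ++ Lxk).drop i = Lv.drop i ++ Lxk :=
            List.drop_append_of_le_length (by omega)
          have h1 : c⁻¹ * ((Lv.drop i).prod * x ^ k) ∈ g.P := by
            have h1' : c⁻¹ * ((Lv ++ Lxk).drop i).prod ∈ g.P := hcdvd
            rw [hdrop, List.prod_append, hLxkprod] at h1'
            exact h1'
          have h2 := key i hi c hcΔ h1
          have h3 := hLv.2 i hi c hcΔ h2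
          show c⁻¹ * (Lv ++ Lxk).get ⟨i, hilt⟩ ∈ g.P
          rw [List.get_eq_getElem, List.getElem_append_left hi]
          exact h3
        · push_neg at hi
          have hj : i - Lv.length < Lxk.length := by omega
          have hdrop : (Lv ++ Lxk).drop i = Lxk.drop (i - Lv.length) := by
            conv_lhs => rw [show i = Lv.length + (i - Lv.length) from by omega]
            exact List.drop_length_add_append _
          have h1 : c⁻¹ * (Lxk.drop (i - Lv.length)).prod ∈ g.P := by
            have h1' : c⁻¹ * ((Lv ++ Lxk).drop i).prod ∈ g.P := hcdvd
            rw [hdrop] at h1'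
            exact h1'
          have h3 := hLxk.2 (i - Lv.length) hj c hcΔ h1
          show c⁻¹ * (Lv ++ Lxk).get ⟨i, hilt⟩ ∈ g.P
          rw [List.get_eq_getElem, List.getElem_append_right hi]
          exact h3
  · rw [List.prod_append, hLvprod, hLxkprod, hz1]
end
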